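/- For every s ∈ (0,1) and every γ > 0, the smoothed von Mises resolvent R_s is monotone, i.e. (R_s(τ) − R_s(σ)):(τ − σ) ≥ 0 for all σ, τ ∈ ℝ^{d×d}_s. -/

import Mathlib

open scoped Classical

/-- The Frobenius inner product `σ : τ = trace (σ τ)` on (symmetric) matrices. -/
noncomputable def frob {d : ℕ} (A B : Matrix (Fin d) (Fin d) ℝ) : ℝ :=
  Matrix.trace (A * B)

/-- The norm induced by the Frobenius inner product (on symmetric matrices). -/
noncomputable def fnorm {d : ℕ} (A : Matrix (Fin d) (Fin d) ℝ) : ℝ :=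
  Real.sqrt (frob A A)

/-- The deviator `τ^D = τ - (trace τ / d) • I`. -/
noncomputable def dev {d : ℕ} (A : Matrix (Fin d) (Fin d) ℝ) : Matrix (Fin d) (Fin d) ℝ :=
  A - (Matrix.trace A / (d : ℝ)) • (1 : Matrix (Fin d) (Fin d) ℝ)

/-- The smoothed max function `max_s`. -/
noncomputable def maxs (s r : ℝ) : ℝ :=
  if s ≤ |r| then max 0 r else (r + s) ^ 2 / (4 * s)

/-- The smoothed von Mises resolvent `R_s`. -/
noncomputable def Rs {d : ℕ} (s γ : ℝ) (τ : Matrix (Fin d) (Fin d) ℝ) :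
    Matrix (Fin d) (Fin d) ℝ :=
  if dev τ = 0 then τ else τ - maxs s (1 - γ / fnorm (dev τ)) • dev τ

/-!
Write `R_s τ = (τ - τ^D) + φ(|τ^D|) τ^D` with `φ(r) = 1 - max_s(1 - γ/r)`. The first summand is
the orthogonal projection onto the multiples of the identity, hence monotone, and the second is a
radial map on the traceless matrices. A radial map `x ↦ φ(|x|) x` with `φ ≥ 0` is monotone as soon
as `r ↦ r φ(r)` is nondecreasing, because Cauchy–Schwarz gives
`(φ(|y|) y - φ(|x|) x) : (y - x) ≥ (|y| φ(|y|) - |x| φ(|x|)) (|y| - |x|)`.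

Finally, `max_s r` is the maximum over `t ∈ [0,1]` of `t (r + s) - s t²`, so it is convex and
nondecreasing, and `max_s 1 = 1` since `s ≤ 1`. For `0 < a ≤ b`, the point `1 - γ/b` is the convex
combination of `1 - γ/a` and `1` with weights `a/b` and `1 - a/b`; convexity then gives
`b max_s(1 - γ/b) ≤ a max_s(1 - γ/a) + b - a`, i.e. `r φ(r)` is nondecreasing.
-/

open Set Matrix WithLp

section SmoothedMax

variable {s : ℝ}

lemma affine_le_maxs (hs : 0 < s) {t : ℝ} (ht : t ∈ Icc (0 : ℝ) 1) (r : ℝ) :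
    t * (r + s) - s * t ^ 2 ≤ maxs s r := by
  obtain ⟨ht0, ht1⟩ := ht
  unfold maxs
  split_ifs with h
  · rcases le_abs'.mp h with h | h
    · nlinarith [le_max_left 0 r]
    · rw [max_eq_right (by linarith)]
      nlinarith [mul_nonneg (sub_nonneg.2 ht1) (by nlinarith : 0 ≤ r - s * t)]
  · rw [le_div_iff₀ (by positivity)]
    nlinarith [sq_nonneg (r + s - 2 * s * t)]

lemma exists_maxs_eq_affine (hs : 0 < s) (r : ℝ) :
    ∃ t ∈ Icc (0 : ℝ) 1, maxs s r = t * (r + s) - s * t ^ 2 := by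
  unfold maxs
  split_ifs with h
  · rcases le_abs'.mp h with h | h
    · exact ⟨0, by simp, by simp; linarith⟩
    · exact ⟨1, by simp, by rw [max_eq_right (by linarith)]; ring⟩
  · rw [not_le, abs_lt] at h
    refine ⟨(r + s) / (2 * s), ⟨div_nonneg (by linarith) (by positivity), ?_⟩, ?_⟩
    · rw [div_le_one (by positivity)]; linarith
    · field_simp; ring

lemma convexOn_maxs (hs : 0 < s) : ConvexOn ℝ univ (maxs s) := by
  refine ⟨convex_univ, fun x _ y _ a b ha hb hab => ?_⟩
  obtain ⟨t, ht, heq⟩ := exists_maxs_eq_affine hs (a • x + b • y)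
  have hx := affine_le_maxs hs ht x
  have hy := affine_le_maxs hs ht y
  simp only [smul_eq_mul] at heq ⊢
  calc maxs s (a * x + b * y)
      = a * (t * (x + s) - s * t ^ 2) + b * (t * (y + s) - s * t ^ 2) := by
        rw [heq]; linear_combination (s * t ^ 2 - t * s) * hab
    _ ≤ a * maxs s x + b * maxs s y := by gcongr

lemma monotone_maxs (hs : 0 < s) : Monotone (maxs s) := fun x y hxy => by
  obtain ⟨t, ht, heq⟩ := exists_maxs_eq_affine hs x
  calc maxs s x = t * (x + s) - s * t ^ 2 := heq
    _ ≤ t * (y + s) - s * t ^ 2 := by gcongr; exact ht.1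
    _ ≤ maxs s y := affine_le_maxs hs ht y

lemma maxs_one (hs : s ≤ 1) : maxs s 1 = 1 := by
  simp [maxs, hs]

end SmoothedMax

noncomputable def radialFactor (s γ r : ℝ) : ℝ :=
  1 - maxs s (1 - γ / r)

section RadialFactor

variable {s γ : ℝ}

lemma radialFactor_nonneg (hs : 0 < s) (hs1 : s ≤ 1) (hγ : 0 ≤ γ) {r : ℝ} (hr : 0 ≤ r) :
    0 ≤ radialFactor s γ r := by
  rw [radialFactor, sub_nonneg]
  exact (monotone_maxs hs (by linarith [div_nonneg hγ hr])).trans (maxs_one hs1).le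

lemma monotoneOn_mul_radialFactor (hs : 0 < s) (hs1 : s ≤ 1) (hγ : 0 ≤ γ) :
    MonotoneOn (fun r => r * radialFactor s γ r) (Ici 0) := by
  intro a ha b hb hab
  rcases (mem_Ici.mp ha).eq_or_lt with rfl | ha
  · simpa using mul_nonneg hb (radialFactor_nonneg hs hs1 hγ hb)
  have hb : 0 < b := ha.trans_le hab
  have hconv := (convexOn_maxs hs).2 (mem_univ (1 - γ / a)) (mem_univ 1)
    (div_nonneg ha.le hb.le) (div_nonneg (sub_nonneg.2 hab) hb.le) (by field_simp; ring)
  rw [show (a / b) • (1 - γ / a) + ((b - a) / b) • (1 : ℝ) = 1 - γ / b by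
    simp only [smul_eq_mul]; field_simp; ring, maxs_one hs1] at hconv
  simp only [smul_eq_mul] at hconv
  have hscaled : b * maxs s (1 - γ / b) ≤ a * maxs s (1 - γ / a) + (b - a) :=
    calc b * maxs s (1 - γ / b)
        ≤ b * (a / b * maxs s (1 - γ / a) + (b - a) / b * 1) := by gcongr
      _ = a * maxs s (1 - γ / a) + (b - a) := by field_simp
  simp only [radialFactor]
  linarith

end RadialFactor

theorem inner_radial_sub_nonneg {E : Type*} [NormedAddCommGroup E] [InnerProductSpace ℝ E]
    {φ : ℝ → ℝ} (hφ : ∀ r, 0 ≤ r → 0 ≤ φ r) (hmono : MonotoneOn (fun r => r * φ r) (Ici 0))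
    (x y : E) : 0 ≤ inner ℝ (φ ‖y‖ • y - φ ‖x‖ • x) (y - x) := by
  have hexpand : inner ℝ (φ ‖y‖ • y - φ ‖x‖ • x) (y - x)
      = φ ‖y‖ * ‖y‖ ^ 2 + φ ‖x‖ * ‖x‖ ^ 2 - (φ ‖x‖ + φ ‖y‖) * inner ℝ x y := by
    simp only [inner_sub_left, inner_sub_right, real_inner_smul_left, real_inner_self_eq_norm_sq,
      real_inner_comm x y]
    ring
  have hcs : (φ ‖x‖ + φ ‖y‖) * inner ℝ x y ≤ (φ ‖x‖ + φ ‖y‖) * (‖x‖ * ‖y‖) :=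
    mul_le_mul_of_nonneg_left (real_inner_le_norm x y)
      (add_nonneg (hφ _ (norm_nonneg x)) (hφ _ (norm_nonneg y)))
  have hprofile : 0 ≤ (‖y‖ * φ ‖y‖ - ‖x‖ * φ ‖x‖) * (‖y‖ - ‖x‖) := by
    rcases le_total ‖x‖ ‖y‖ with h | h
    · exact mul_nonneg (sub_nonneg.2 (hmono (norm_nonneg x) (norm_nonneg y) h)) (sub_nonneg.2 h)
    · exact mul_nonneg_of_nonpos_of_nonpos
        (sub_nonpos.2 (hmono (norm_nonneg y) (norm_nonneg x) h)) (sub_nonpos.2 h)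
  linarith

section Deviator

variable {d : ℕ}

lemma trace_dev (A : Matrix (Fin d) (Fin d) ℝ) : trace (dev A) = 0 := by
  rcases Nat.eq_zero_or_pos d with rfl | hd
  · simp [trace]
  · simp only [dev, trace_sub, trace_smul, trace_one, Fintype.card_fin, smul_eq_mul]
    field_simp
    ring

lemma dev_sub (A B : Matrix (Fin d) (Fin d) ℝ) : dev (A - B) = dev A - dev B := by
  simp only [dev, trace_sub, sub_div, sub_smul]
  abel

lemma Matrix.IsSymm.dev {A : Matrix (Fin d) (Fin d) ℝ} (hA : A.IsSymm) : (dev A).IsSymm :=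
  hA.sub (isSymm_one.smul _)

lemma frob_add_left (A B C : Matrix (Fin d) (Fin d) ℝ) :
    frob (A + B) C = frob A C + frob B C := by
  simp [frob, add_mul]

lemma frob_dev_right_of_trace_eq_zero {C : Matrix (Fin d) (Fin d) ℝ} (hC : trace C = 0)
    (X : Matrix (Fin d) (Fin d) ℝ) : frob C (dev X) = frob C X := by
  simp [frob, dev, mul_sub, trace_sub, hC]

lemma frob_sub_dev_self_nonneg (X : Matrix (Fin d) (Fin d) ℝ) : 0 ≤ frob (X - dev X) X := by
  have : frob (X - dev X) X = trace X ^ 2 / d := by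
    simp only [frob, dev, sub_sub_cancel, smul_mul_assoc, one_mul, trace_smul, smul_eq_mul]
    ring
  rw [this]
  positivity

lemma frob_eq_inner (A : Matrix (Fin d) (Fin d) ℝ) {B : Matrix (Fin d) (Fin d) ℝ}
    (hB : B.IsSymm) : frob A B = inner ℝ (toLp 2 (vec A)) (toLp 2 (vec B)) := by
  rw [EuclideanSpace.inner_toLp_toLp, star_trivial, vec_dotProduct_vec, hB.eq, frob,
    trace_mul_comm]

lemma fnorm_eq_norm {A : Matrix (Fin d) (Fin d) ℝ} (hA : A.IsSymm) :
    fnorm A = ‖toLp 2 (vec A)‖ := by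
  rw [fnorm, frob_eq_inner A hA, real_inner_self_eq_norm_sq, Real.sqrt_sq (norm_nonneg _)]

lemma frob_radial_sub_nonneg {φ : ℝ → ℝ} (hφ : ∀ r, 0 ≤ r → 0 ≤ φ r)
    (hmono : MonotoneOn (fun r => r * φ r) (Ici 0)) {A B : Matrix (Fin d) (Fin d) ℝ}
    (hA : A.IsSymm) (hB : B.IsSymm) :
    0 ≤ frob (φ (fnorm B) • B - φ (fnorm A) • A) (B - A) := by
  rw [frob_eq_inner _ (hB.sub hA), fnorm_eq_norm hA, fnorm_eq_norm hB]
  simpa only [vec_sub, vec_smul, toLp_sub, toLp_smul] using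
    inner_radial_sub_nonneg hφ hmono (toLp 2 (vec A)) (toLp 2 (vec B))

lemma Rs_eq_radialFactor (s γ : ℝ) (τ : Matrix (Fin d) (Fin d) ℝ) :
    Rs s γ τ = τ - dev τ + radialFactor s γ (fnorm (dev τ)) • dev τ := by
  by_cases h : dev τ = 0
  · simp [Rs, h]
  · rw [Rs, if_neg h, radialFactor, sub_smul, one_smul]
    abel

end Deviator

theorem smoothed_resolvent_monotone_general
    (d : ℕ) (s : ℝ) (hs : s ∈ Set.Ioo (0 : ℝ) 1) (γ : ℝ) (hγ : 0 < γ)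
    (σ τ : Matrix (Fin d) (Fin d) ℝ) (hσ : σ.IsSymm) (hτ : τ.IsSymm) :
    0 ≤ frob (Rs s γ τ - Rs s γ σ) (τ - σ) := by
  obtain ⟨hs0, hs1⟩ := hs
  set C := radialFactor s γ (fnorm (dev τ)) • dev τ - radialFactor s γ (fnorm (dev σ)) • dev σ
  have hC : trace C = 0 := by simp [C, trace_sub, trace_smul, trace_dev]
  have hsplit : frob (Rs s γ τ - Rs s γ σ) (τ - σ)
      = frob (τ - σ - dev (τ - σ)) (τ - σ) + frob C (dev (τ - σ)) := by
    rw [frob_dev_right_of_trace_eq_zero hC, ← frob_add_left, Rs_eq_radialFactor,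
      Rs_eq_radialFactor, dev_sub]
    congr 1
    simp only [C]
    abel
  rw [hsplit]
  refine add_nonneg (frob_sub_dev_self_nonneg _) ?_
  rw [dev_sub]
  exact frob_radial_sub_nonneg (fun _ => radialFactor_nonneg hs0 hs1.le hγ.le)
    (monotoneOn_mul_radialFactor hs0 hs1.le hγ.le) hσ.dev hτ.dev

/-- For every `s ∈ (0,1)` and `γ > 0`, the smoothed von Mises resolvent `R_s` is
monotone on the symmetric matrices: `(R_s τ - R_s σ) : (τ - σ) ≥ 0`. -/
theorem smoothed_resolvent_monotone
    (d : ℕ) (hd : 0 < d) (s : ℝ) (hs : s ∈ Set.Ioo (0 : ℝ) 1) (γ : ℝ) (hγ : 0 < γ)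
    (σ τ : Matrix (Fin d) (Fin d) ℝ) (hσ : σ.IsSymm) (hτ : τ.IsSymm) :
    0 ≤ frob (Rs s γ τ - Rs s γ σ) (τ - σ) :=
  smoothed_resolvent_monotone_general d s hs γ hγ σ τ hσ hτ
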